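/- Every finitely generated torsion 𝔖-equivariant module over R/𝔥_s is annihilated by some power of 𝔥_{s−1}, where R = k[x_1, x_2, ...] and 𝔥_r = (x_i^{r+1} : i ≥ 1). -/

import Mathlib

set_option synthInstance.maxHeartbeats 1000000
set_option maxHeartbeats 1000000

/-- The infinite symmetric group `𝔖`: finitely supported permutations of `ℕ`. -/
def FS : Subgroup (Equiv.Perm ℕ) where
  carrier := {σ : Equiv.Perm ℕ | {n : ℕ | σ n ≠ n}.Finite}
  one_mem' := by
    simp
  mul_mem' := by
    intro a b ha hb
    apply Set.Finite.subset (ha.union hb)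
    intro n hn
    simp only [Set.mem_union, Set.mem_setOf_eq]
    by_contra h
    push_neg at h
    exact hn (by simp [Equiv.Perm.mul_apply, h.2, h.1])
  inv_mem' := by
    intro a ha
    show {n : ℕ | a⁻¹ n ≠ n}.Finite
    have : {n : ℕ | a⁻¹ n ≠ n} = {n : ℕ | a n ≠ n} := by
      ext n
      simp only [Set.mem_setOf_eq, ne_eq]
      constructor
      · intro h he
        apply h
        calc a⁻¹ n = a⁻¹ (a n) := by rw [he]
        _ = n := by simp
      · intro h he
        apply h
        calc a n = a (a⁻¹ n) := by rw [he]
        _ = n := by simp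
    rw [this]; exact ha
open MvPolynomial

noncomputable def hIdeal (k : Type) [Field k] (s : ℕ) : Ideal (MvPolynomial ℕ k) :=
  Ideal.span (Set.range fun i : ℕ => (X i : MvPolynomial ℕ k) ^ (s + 1))

lemma hIdeal_le_comap_rename (k : Type) [Field k] (s : ℕ) (σ : Equiv.Perm ℕ) :
    hIdeal k s ≤ (hIdeal k s).comap ((rename (⇑σ) : MvPolynomial ℕ k →ₐ[k] MvPolynomial ℕ k)).toRingHom := by
  rw [hIdeal, Ideal.span_le]
  rintro x ⟨i, rfl⟩
  show rename (⇑σ) ((X i : MvPolynomial ℕ k) ^ (s + 1)) ∈ hIdeal k s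
  rw [map_pow, rename_X]
  exact Ideal.subset_span ⟨σ i, rfl⟩

/-- The action of a permutation of the variables on `R/𝔥_s`. -/
noncomputable def renameQ (k : Type) [Field k] (s : ℕ) (σ : Equiv.Perm ℕ) :
    (MvPolynomial ℕ k ⧸ hIdeal k s) →+* (MvPolynomial ℕ k ⧸ hIdeal k s) :=
  Ideal.quotientMap (hIdeal k s)
    ((rename (⇑σ) : MvPolynomial ℕ k →ₐ[k] MvPolynomial ℕ k)).toRingHom
    (hIdeal_le_comap_rename k s σ)

/-- The quotient ring `A = R/𝔥_s`. -/
abbrev Aq (k : Type) [Field k] (s : ℕ) := MvPolynomial ℕ k ⧸ hIdeal k s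


section AuxLemmas
open Pointwise

open Finsupp in
lemma sumSingle_apply (U : Finset ℕ) (e : ℕ → ℕ) (j : ℕ) :
    (∑ i ∈ U, Finsupp.single i (e i)) j = if j ∈ U then e j else 0 := by
  classical
  rw [Finset.sum_apply']
  rw [Finset.sum_congr rfl (fun i _ => Finsupp.single_apply)]
  exact Finset.sum_ite_eq' U j e

variable {k : Type} [Field k]

lemma ideal_span_pow {A : Type*} [CommRing A] (s : Set A) (n : ℕ) :
    Ideal.span s ^ n = Ideal.span (s ^ n) := by
  induction n with
  | zero => simp [Ideal.one_eq_top, Ideal.span_one]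
  | succ n ih => rw [pow_succ, ih, Ideal.span_mul_span', pow_succ]

lemma mem_hIdeal_of_bad (s : ℕ) (f : MvPolynomial ℕ k)
    (h : ∀ d ∈ f.support, ∃ i, s + 1 ≤ d i) : f ∈ hIdeal k s := by
  have hf : f = ∑ d ∈ f.support, monomial d (coeff d f) :=
    (f.support_sum_monomial_coeff).symm
  rw [hf]
  refine Ideal.sum_mem _ fun d hd => ?_
  obtain ⟨i, hi⟩ := h d hd
  have hle : Finsupp.single i (s + 1) ≤ d := Finsupp.single_le_iff.mpr hi
  have heq : monomial d (coeff d f) =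
      ((X i : MvPolynomial ℕ k) ^ (s + 1)) *
        monomial (d - Finsupp.single i (s + 1)) (coeff d f) := by
    rw [X_pow_eq_monomial, monomial_mul, one_mul, add_tsub_cancel_of_le hle]
  rw [heq]
  exact Ideal.mul_mem_right _ _ (Ideal.subset_span ⟨i, rfl⟩)

/-- The ideal generated by `𝔥_s` together with the `𝔖`-orbit of `f`. -/
def Jset (s : ℕ) (f : MvPolynomial ℕ k) : Set (MvPolynomial ℕ k) :=
  (Set.range fun i : ℕ => (X i : MvPolynomial ℕ k) ^ (s + 1)) ∪
    {g | ∃ σ : FS, g = rename ⇑(σ : Equiv.Perm ℕ) f}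

noncomputable def Jideal (s : ℕ) (f : MvPolynomial ℕ k) : Ideal (MvPolynomial ℕ k) :=
  Ideal.span (Jset s f)

lemma hIdeal_le_J (s : ℕ) (f : MvPolynomial ℕ k) : hIdeal k s ≤ Jideal s f :=
  Ideal.span_mono Set.subset_union_left

lemma self_mem_J (s : ℕ) (f : MvPolynomial ℕ k) : f ∈ Jideal s f := by
  refine Ideal.subset_span (Or.inr ⟨1, ?_⟩)
  simp

lemma rename_mem_J (s : ℕ) (f : MvPolynomial ℕ k) (σ : FS) {z : MvPolynomial ℕ k}
    (hz : z ∈ Jideal s f) : rename ⇑(σ : Equiv.Perm ℕ) z ∈ Jideal s f := by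
  have h1 : rename ⇑(σ : Equiv.Perm ℕ) z ∈
      Ideal.map (rename ⇑(σ : Equiv.Perm ℕ) : MvPolynomial ℕ k →ₐ[k] MvPolynomial ℕ k)
        (Jideal s f) := Ideal.mem_map_of_mem _ hz
  rw [Jideal, Ideal.map_span] at h1
  refine Ideal.span_le.mpr ?_ h1
  rintro _ ⟨g, hg, rfl⟩
  simp only [Jset, Set.mem_union, Set.mem_range, Set.mem_setOf_eq] at hg
  rcases hg with ⟨i, rfl⟩ | ⟨τ, rfl⟩
  · refine Ideal.subset_span (Or.inl ⟨(σ : Equiv.Perm ℕ) i, ?_⟩)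
    rw [map_pow, rename_X]
  · refine Ideal.subset_span (Or.inr ⟨σ * τ, ?_⟩)
    show rename ⇑(σ : Equiv.Perm ℕ) (rename ⇑(τ : Equiv.Perm ℕ) f) = _
    rw [rename_rename]
    congr 1

lemma swap_mem_FS (a b : ℕ) : Equiv.swap a b ∈ FS := by
  show {n : ℕ | Equiv.swap a b n ≠ n}.Finite
  refine Set.Finite.subset ((Set.finite_singleton b).insert a) ?_
  intro n hn
  by_contra h
  simp only [Set.mem_insert_iff, Set.mem_singleton_iff] at h
  push_neg at h
  exact hn (Equiv.swap_apply_of_ne_of_ne h.1 h.2)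

lemma perm_image : ∀ (n : ℕ) (S T : Finset ℕ), S.card = n → T.card = n →
    ∃ σ : FS, S.image ⇑(σ : Equiv.Perm ℕ) = T := by
  intro n
  induction n with
  | zero =>
    intro S T hS hT
    rw [Finset.card_eq_zero] at hS hT
    exact ⟨1, by simp [hS, hT]⟩
  | succ n ih =>
    intro S T hS hT
    obtain ⟨a, ha⟩ := Finset.card_pos.mp (by omega : 0 < S.card)
    obtain ⟨b, hb⟩ := Finset.card_pos.mp (by omega : 0 < T.card)
    obtain ⟨σ', hσ'⟩ := ih (S.erase a) (T.erase b)
      (by rw [Finset.card_erase_of_mem ha, hS]; omega) (by rw [Finset.card_erase_of_mem hb, hT]; omega)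
    set c : ℕ := (σ' : Equiv.Perm ℕ) a with hc
    refine ⟨⟨Equiv.swap c b, swap_mem_FS c b⟩ * σ', ?_⟩
    have hcoe : ⇑(((⟨Equiv.swap c b, swap_mem_FS c b⟩ * σ' : FS) : Equiv.Perm ℕ)) =
        ⇑(Equiv.swap c b) ∘ ⇑(σ' : Equiv.Perm ℕ) := by
      rfl
    rw [hcoe, ← Finset.image_image]
    have hSa : S = insert a (S.erase a) := (Finset.insert_erase ha).symm
    rw [hSa, Finset.image_insert, hσ', Finset.image_insert]
    have hcT : c ∉ T.erase b := by
      rw [← hσ']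
      intro hcm
      obtain ⟨x, hx, hxe⟩ := Finset.mem_image.mp hcm
      have : x = a := (σ' : Equiv.Perm ℕ).injective hxe
      exact (Finset.mem_erase.mp hx).1 (by rw [← this])
    have himg : (T.erase b).image ⇑(Equiv.swap c b) = T.erase b := by
      rw [Finset.image_congr (g := id) ?_, Finset.image_id]
      intro x hx
      exact Equiv.swap_apply_of_ne_of_ne
        (by rintro rfl; exact hcT hx) (Finset.mem_erase.mp hx).1
    rw [himg, Equiv.swap_apply_left, Finset.insert_erase hb]

lemma prod_X_pow_eq (U : Finset ℕ) (e : ℕ → ℕ) :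
    (∏ i ∈ U, (X i : MvPolynomial ℕ k) ^ e i) =
      monomial (∑ i ∈ U, Finsupp.single i (e i)) 1 := by
  classical
  induction U using Finset.induction with
  | empty => simp
  | @insert a U ha ih =>
    rw [Finset.prod_insert ha, ih, Finset.sum_insert ha, X_pow_eq_monomial,
      monomial_mul, one_mul]

lemma key_prod_mem (s : ℕ) (f : MvPolynomial ℕ k) (hf : f ∉ hIdeal k s) :
    ∃ U : Finset ℕ, (∏ i ∈ U, (X i : MvPolynomial ℕ k) ^ s) ∈ Jideal s f := by
  classical
  have hex : ∃ d ∈ f.support, ∀ i, d i ≤ s := by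
    by_contra h
    push_neg at h
    refine hf (mem_hIdeal_of_bad s f fun d hd => ?_)
    obtain ⟨i, hi⟩ := h d hd
    exact ⟨i, hi⟩
  set D := f.support.filter (fun d => ∀ i, d i ≤ s) with hD
  have hDne : D.Nonempty := by
    obtain ⟨d, hd1, hd2⟩ := hex
    exact ⟨d, Finset.mem_filter.mpr ⟨hd1, hd2⟩⟩
  obtain ⟨d₀, hd₀D, hmin⟩ := D.exists_minimal hDne
  obtain ⟨hd₀supp, hd₀le⟩ := Finset.mem_filter.mp hd₀D
  set U := f.support.sup Finsupp.support with hU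
  have hsub : ∀ d ∈ f.support, d.support ⊆ U := fun d hd => Finset.le_sup hd
  set u : ℕ →₀ ℕ := ∑ i ∈ U, Finsupp.single i (s - d₀ i) with hu
  have huapp : ∀ j, u j = if j ∈ U then s - d₀ j else 0 := fun j => sumSingle_apply U _ j
  have hmul : monomial u 1 * f = ∑ d ∈ f.support, monomial (u + d) (coeff d f) := by
    conv_lhs => rw [← f.support_sum_monomial_coeff]
    rw [Finset.mul_sum]
    exact Finset.sum_congr rfl fun d hd => by rw [monomial_mul, one_mul]
  have hrest : ∀ d ∈ f.support, d ≠ d₀ → monomial (u + d) (coeff d f) ∈ hIdeal k s := by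
    intro d hd hne
    refine mem_hIdeal_of_bad s _ fun d' hd' => ?_
    have hd'eq : d' = u + d := by
      have := MvPolynomial.support_monomial_subset hd'
      exact Finset.mem_singleton.mp this
    subst hd'eq
    by_cases hdD : d ∈ D
    · have hgt : ∃ i, d₀ i < d i := by
        by_contra hcon
        push_neg at hcon
        have hled : d ≤ d₀ := Finsupp.le_def.mpr hcon
        exact hne (le_antisymm hled (hmin hdD hled))
      obtain ⟨i, hi⟩ := hgt
      have hiU : i ∈ U := hsub d hd (Finsupp.mem_support_iff.mpr (by omega))
      refine ⟨i, ?_⟩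
      have h1 := huapp i
      rw [if_pos hiU] at h1
      have h2 := hd₀le i
      simp only [Finsupp.add_apply]
      omega
    · have : ¬ ∀ i, d i ≤ s := fun hall => hdD (Finset.mem_filter.mpr ⟨hd, hall⟩)
      push_neg at this
      obtain ⟨i, hi⟩ := this
      refine ⟨i, ?_⟩
      simp only [Finsupp.add_apply]
      omega
  have hmem : monomial (u + d₀) (coeff d₀ f) ∈ Jideal s f := by
    have h1 : monomial u 1 * f ∈ Jideal s f :=
      Ideal.mul_mem_left _ _ (self_mem_J s f)
    rw [hmul, ← Finset.add_sum_erase _ _ hd₀supp] at h1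
    have h2 : (∑ d ∈ f.support.erase d₀, monomial (u + d) (coeff d f)) ∈ Jideal s f :=
      hIdeal_le_J s f (Ideal.sum_mem _ fun d hd =>
        hrest d (Finset.mem_of_mem_erase hd) (Finset.ne_of_mem_erase hd))
    have h3 := Ideal.sub_mem _ h1 h2
    simpa using h3
  have hud : u + d₀ = ∑ i ∈ U, Finsupp.single i s := by
    ext j
    rw [Finsupp.add_apply, sumSingle_apply U (fun _ => s) j]
    by_cases hj : j ∈ U
    · rw [if_pos hj]
      have h1 := huapp j
      rw [if_pos hj] at h1
      have h2 := hd₀le j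
      omega
    · rw [if_neg hj]
      have h1 := huapp j
      rw [if_neg hj] at h1
      have h2 : d₀ j = 0 :=
        Finsupp.notMem_support_iff.mp (fun hjs => hj (hsub d₀ hd₀supp hjs))
      omega
  refine ⟨U, ?_⟩
  have hprod : (∏ i ∈ U, (X i : MvPolynomial ℕ k) ^ s) = monomial (u + d₀) 1 := by
    rw [prod_X_pow_eq U (fun _ => s), hud]
  have hc : coeff d₀ f ≠ 0 := mem_support_iff.mp hd₀supp
  have hsplit : (monomial (u + d₀) 1 : MvPolynomial ℕ k) =
      C (coeff d₀ f)⁻¹ * monomial (u + d₀) (coeff d₀ f) := by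
    rw [C_mul_monomial, inv_mul_cancel₀ hc]
  rw [hprod, hsplit]
  exact Ideal.mul_mem_left _ _ hmem

lemma pow_le_J (s : ℕ) (hs : 1 ≤ s) (f : MvPolynomial ℕ k) (hf : f ∉ hIdeal k s) :
    ∃ N : ℕ, hIdeal k (s - 1) ^ N ≤ Jideal s f := by
  classical
  obtain ⟨U, hU⟩ := key_prod_mem s f hf
  refine ⟨U.card, ?_⟩
  have hgen : hIdeal k (s - 1) =
      Ideal.span (Set.range fun i : ℕ => (X i : MvPolynomial ℕ k) ^ s) := by
    rw [hIdeal]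
    congr 1
    have : s - 1 + 1 = s := by omega
    rw [this]
  rw [hgen, ideal_span_pow, Ideal.span_le]
  intro z hz
  rw [Set.mem_pow] at hz
  obtain ⟨F, hF⟩ := hz
  have hchoose : ∀ j : Fin U.card, ∃ i : ℕ, (X i : MvPolynomial ℕ k) ^ s = (F j : MvPolynomial ℕ k) :=
    fun j => (F j).2
  choose idx hidx using hchoose
  have hz' : z = ∏ j : Fin U.card, (X (idx j) : MvPolynomial ℕ k) ^ s := by
    rw [← hF, List.prod_ofFn]
    exact (Finset.prod_congr rfl fun j _ => (hidx j)).symm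
  by_cases hinj : Function.Injective idx
  · have hcard : (Finset.image idx Finset.univ).card = U.card := by
      rw [Finset.card_image_of_injective _ hinj, Finset.card_univ, Fintype.card_fin]
    obtain ⟨σ, hσ⟩ := perm_image U.card U (Finset.image idx Finset.univ) rfl hcard
    have hmem := rename_mem_J s f σ hU
    rw [map_prod] at hmem
    have heq1 : (∏ i ∈ U, rename ⇑(σ : Equiv.Perm ℕ) ((X i : MvPolynomial ℕ k) ^ s)) =
        ∏ i ∈ U, (X ((σ : Equiv.Perm ℕ) i) : MvPolynomial ℕ k) ^ s :=
      Finset.prod_congr rfl fun i _ => by rw [map_pow, rename_X]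
    rw [heq1] at hmem
    have heq2 : (∏ i ∈ U, (X ((σ : Equiv.Perm ℕ) i) : MvPolynomial ℕ k) ^ s) =
        ∏ t ∈ U.image ⇑(σ : Equiv.Perm ℕ), (X t : MvPolynomial ℕ k) ^ s :=
      (Finset.prod_image (f := fun t => (X t : MvPolynomial ℕ k) ^ s)
        fun x _ y _ h => (σ : Equiv.Perm ℕ).injective h).symm
    rw [heq2, hσ] at hmem
    have heq3 : (∏ t ∈ Finset.image idx Finset.univ, (X t : MvPolynomial ℕ k) ^ s) = z := by
      rw [hz']
      exact Finset.prod_image (f := fun t => (X t : MvPolynomial ℕ k) ^ s)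
        fun x _ y _ h => hinj h
    rwa [heq3] at hmem
  · rw [Function.not_injective_iff] at hinj
    obtain ⟨j₁, j₂, hje, hjne⟩ := hinj
    refine hIdeal_le_J s f ?_
    have hj₂mem : j₂ ∈ (Finset.univ : Finset (Fin U.card)).erase j₁ :=
      Finset.mem_erase.mpr ⟨Ne.symm hjne, Finset.mem_univ _⟩
    have hsplit : z = (X (idx j₁) : MvPolynomial ℕ k) ^ s *
        ((X (idx j₁) : MvPolynomial ℕ k) ^ s *
        ∏ j ∈ ((Finset.univ : Finset (Fin U.card)).erase j₁).erase j₂,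
          (X (idx j) : MvPolynomial ℕ k) ^ s) := by
      rw [hz', ← Finset.mul_prod_erase Finset.univ _ (Finset.mem_univ j₁),
        ← Finset.mul_prod_erase _ _ hj₂mem, ← hje]
    have hfactor : z = (X (idx j₁) : MvPolynomial ℕ k) ^ (s + 1) *
        ((X (idx j₁) : MvPolynomial ℕ k) ^ (s - 1) *
          ∏ j ∈ ((Finset.univ : Finset (Fin U.card)).erase j₁).erase j₂,
            (X (idx j) : MvPolynomial ℕ k) ^ s) := by
      rw [hsplit, ← mul_assoc, ← mul_assoc, ← pow_add, ← pow_add]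
      congr 2
      omega
    rw [hfactor]
    exact Ideal.mul_mem_right _ _ (Ideal.subset_span ⟨idx j₁, rfl⟩)

lemma renameQ_mk (s : ℕ) (σ : Equiv.Perm ℕ) (f : MvPolynomial ℕ k) :
    renameQ k s σ (Ideal.Quotient.mk (hIdeal k s) f) =
      Ideal.Quotient.mk (hIdeal k s) (rename ⇑σ f) :=
  Ideal.quotientMap_mk

lemma renameQ_renameQ_inv (s : ℕ) (σ : Equiv.Perm ℕ) (z : Aq k s) :
    renameQ k s σ (renameQ k s σ⁻¹ z) = z := by
  obtain ⟨g, rfl⟩ := Ideal.Quotient.mk_surjective z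
  rw [renameQ_mk, renameQ_mk, rename_rename]
  congr 1
  have h : (⇑σ ∘ ⇑σ⁻¹) = id := by
    funext x
    simp
  rw [h, rename_id, AlgHom.id_apply]

lemma map_rename_hIdeal_pow (s' n : ℕ) (τ : Equiv.Perm ℕ) (g : MvPolynomial ℕ k)
    (hg : g ∈ hIdeal k s' ^ n) : rename ⇑τ g ∈ hIdeal k s' ^ n := by
  have h1 : Ideal.map (rename ⇑τ : MvPolynomial ℕ k →ₐ[k] MvPolynomial ℕ k)
      (hIdeal k s') = hIdeal k s' := by
    rw [hIdeal, Ideal.map_span]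
    congr 1
    ext z
    constructor
    · rintro ⟨_, ⟨i, rfl⟩, rfl⟩
      exact ⟨τ i, by rw [map_pow, rename_X]⟩
    · rintro ⟨i, rfl⟩
      refine ⟨X (τ⁻¹ i) ^ (s' + 1), ⟨τ⁻¹ i, rfl⟩, ?_⟩
      rw [map_pow, rename_X]
      congr 2
      simp
  have h2 := Ideal.mem_map_of_mem
    (rename ⇑τ : MvPolynomial ℕ k →ₐ[k] MvPolynomial ℕ k) hg
  rwa [Ideal.map_pow, h1] at h2

end AuxLemmas

/-- A finitely generated torsion `𝔖`-equivariant module over `R/𝔥_s` is annihilated by a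
power of `𝔥_{s−1}`.  Here torsion means every element is killed by the `𝔖`-orbit of some
nonzero element of `R/𝔥_s`, and finitely generated means generated by finitely many
`𝔖`-orbits. -/
theorem torsion_killed_by_power (k : Type) [Field k] (s : ℕ) (hs : 1 ≤ s)
    (M : Type) [AddCommGroup M] [Module (Aq k s) M]
    (act : FS → M →+ M)
    (hone : ∀ m : M, act 1 m = m)
    (hmul : ∀ (σ τ : FS) (m : M), act (σ * τ) m = act σ (act τ m))
    (hsl : ∀ (σ : FS) (a : Aq k s) (m : M),
      act σ (a • m) = (renameQ k s (σ : Equiv.Perm ℕ) a) • act σ m)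
    (hsm : ∀ m : M, ∃ N : ℕ, ∀ σ : FS, (∀ i < N, (σ : Equiv.Perm ℕ) i = i) → act σ m = m)
    (hfg : ∃ T : Finset M,
      Submodule.span (Aq k s) {m : M | ∃ x ∈ T, ∃ σ : FS, m = act σ x} = ⊤)
    (htors : ∀ x : M, ∃ a : Aq k s, a ≠ 0 ∧
      ∀ σ : FS, (renameQ k s (σ : Equiv.Perm ℕ) a) • x = 0) :
    ∃ N : ℕ, ∀ a ∈ ((hIdeal k (s - 1)).map (Ideal.Quotient.mk (hIdeal k s))) ^ N,
      ∀ x : M, a • x = 0 := by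
  classical
  obtain ⟨T, hT⟩ := hfg
  have hchoice : ∀ t : M, ∃ N : ℕ,
      ∀ z ∈ ((hIdeal k (s - 1)).map (Ideal.Quotient.mk (hIdeal k s))) ^ N, z • t = 0 := by
    intro t
    obtain ⟨a, ha0, haσ⟩ := htors t
    obtain ⟨f, rfl⟩ := Ideal.Quotient.mk_surjective a
    have hfnot : f ∉ hIdeal k s := fun h => ha0 (Ideal.Quotient.eq_zero_iff_mem.mpr h)
    obtain ⟨N, hN⟩ := pow_le_J s hs f hfnot
    refine ⟨N, fun z hz => ?_⟩
    set Ann : Ideal (Aq k s) :=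
      { carrier := {z : Aq k s | z • t = 0}
        add_mem' := fun {x y} hx hy => by
          simp only [Set.mem_setOf_eq] at *
          rw [add_smul, hx, hy, add_zero]
        zero_mem' := by exact zero_smul (Aq k s) t
        smul_mem' := fun c z hz => by
          simp only [Set.mem_setOf_eq, smul_eq_mul] at *
          rw [mul_smul, hz, smul_zero] } with hAnn
    have h1 : ((hIdeal k (s - 1)).map (Ideal.Quotient.mk (hIdeal k s))) ^ N =
        Ideal.map (Ideal.Quotient.mk (hIdeal k s)) (hIdeal k (s - 1) ^ N) :=
      (Ideal.map_pow _ _ _).symm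
    rw [h1] at hz
    have h2 : Ideal.map (Ideal.Quotient.mk (hIdeal k s)) (hIdeal k (s - 1) ^ N) ≤ Ann := by
      rw [Ideal.map_le_iff_le_comap]
      refine le_trans hN ?_
      rw [Jideal, Ideal.span_le]
      intro g hg
      simp only [Jset, Set.mem_union, Set.mem_range, Set.mem_setOf_eq] at hg
      rcases hg with ⟨i, rfl⟩ | ⟨σ, rfl⟩
      · show Ideal.Quotient.mk (hIdeal k s) ((X i : MvPolynomial ℕ k) ^ (s + 1)) • t = 0
        have hx : Ideal.Quotient.mk (hIdeal k s) ((X i : MvPolynomial ℕ k) ^ (s + 1)) = 0 :=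
          Ideal.Quotient.eq_zero_iff_mem.mpr (Ideal.subset_span ⟨i, rfl⟩)
        rw [hx]; exact zero_smul (Aq k s) t
      · show Ideal.Quotient.mk (hIdeal k s) (rename ⇑(σ : Equiv.Perm ℕ) f) • t = 0
        rw [← renameQ_mk]
        exact haσ σ
    exact h2 hz
  choose Nf hNf using hchoice
  refine ⟨T.sup Nf, ?_⟩
  set Ibar := (hIdeal k (s - 1)).map (Ideal.Quotient.mk (hIdeal k s)) with hIbar
  set Nmax := T.sup Nf with hNmax
  set P : Submodule (Aq k s) M :=
    { carrier := {m : M | ∀ b ∈ Ibar ^ Nmax, b • m = 0}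
      add_mem' := fun {x y} hx hy => by
        intro b hb
        rw [smul_add, hx b hb, hy b hb, add_zero]
      zero_mem' := fun b _ => smul_zero b
      smul_mem' := fun c m hm => by
        intro b hb
        rw [smul_comm, hm b hb, smul_zero] } with hP
  have hgen : {m : M | ∃ x ∈ T, ∃ σ : FS, m = act σ x} ⊆ P := by
    rintro m ⟨t, htT, σ, rfl⟩
    intro b hb
    have hstab : renameQ k s (↑σ)⁻¹ b ∈ Ibar ^ Nmax := by
      rw [hIbar, ← Ideal.map_pow] at hb ⊢
      obtain ⟨g, hg, rfl⟩ :=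
        (Ideal.mem_map_iff_of_surjective _ Ideal.Quotient.mk_surjective).mp hb
      rw [renameQ_mk]
      exact Ideal.mem_map_of_mem _ (map_rename_hIdeal_pow (s - 1) Nmax _ g hg)
    have h1 : renameQ k s ↑σ (renameQ k s (↑σ)⁻¹ b) = b := renameQ_renameQ_inv s _ b
    have h2 := hsl σ (renameQ k s (↑σ)⁻¹ b) t
    rw [h1] at h2
    rw [← h2]
    have hle : Ibar ^ Nmax ≤ Ibar ^ (Nf t) := Ideal.pow_le_pow_right (Finset.le_sup htT)
    rw [hNf t _ (hle hstab), map_zero]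
  intro b hb x
  have hxP : x ∈ P := by
    have hle : Submodule.span (Aq k s) {m : M | ∃ x ∈ T, ∃ σ : FS, m = act σ x} ≤ P :=
      Submodule.span_le.mpr hgen
    rw [hT] at hle
    exact hle Submodule.mem_top
  exact hxP b hb
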